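/- For all n ≥ 0, the number of Fishburn permutations of length n which avoid both 321 and 1423 is |F_n(321, 1423)| = F_{n+2} − n − 1, where F_m denotes the Fibonacci numbers with F_0 = F_1 = 1 and F_m = F_{m−1} + F_{m−2} for m ≥ 2. -/

import Mathlib

/-!
Let `π ∈ F_n(321, 1423)` and let `v` be its last entry. If `v = n`, deleting it leaves an element
of `F_{n-1}`. Otherwise look at the position of `v + 1`. If it sits just before `v`, then
`v + 1 = n` (else `n, v + 1, v` is a `321`), and deleting both entries leaves an element of
`F_{n-2}`. In the remaining case the Fishburn condition and the two patterns force `v + 1` to be the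
first entry and the entries strictly between the first and the last to increase, so
`π = k 1 2 ⋯ (k-2) (k+1) ⋯ n (k-1)` with `3 ≤ k ≤ n`. All these lists do lie in the class, hence
`a_n = a_{n-1} + a_{n-2} + (n - 2)`, and with `a_0 = a_1 = 1`, `a_2 = 2` this gives
`a_n = F_{n+2} - n - 1`.
-/

/-- Two lists of naturals have the same length and the same relative order
(including ties). -/
def SameRelOrder (u v : List ℕ) : Prop :=
  u.length = v.length ∧
    ∀ i j, i < u.length → j < u.length →
      (u.getD i 0 < u.getD j 0 ↔ v.getD i 0 < v.getD j 0)

/-- `α` contains `β` as a pattern: some subsequence of `α` has the same length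
and relative order as `β`. -/
def SeqContains (α β : List ℕ) : Prop :=
  ∃ γ : List ℕ, γ.Sublist α ∧ SameRelOrder γ β

/-- A copy of the Fishburn pattern `f` in `l`: indices `j`, `k` with `j + 1 < k`,
`l j = l k + 1` and `l (j+1) > l j`. -/
def HasFishburnCopy (l : List ℕ) : Prop :=
  ∃ j k, j + 1 < k ∧ k < l.length ∧
    l.getD j 0 = l.getD k 0 + 1 ∧ l.getD j 0 < l.getD (j + 1) 0

/-- A Fishburn permutation contains no copy of the Fishburn pattern `f`. -/
def FishburnFree (l : List ℕ) : Prop := ¬ HasFishburnCopy l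

/-- `l` is a permutation of `1, …, n`, written in one-line notation. -/
def IsPermList (n : ℕ) (l : List ℕ) : Prop := l.Perm (List.range' 1 n)

/-- The set of Fishburn permutations of length `n` avoiding each pattern in `pats`. -/
def FishburnSet (n : ℕ) (pats : List (List ℕ)) : Set (List ℕ) :=
  {l | IsPermList n l ∧ FishburnFree l ∧ ∀ p ∈ pats, ¬ SeqContains l p}

/-- The set of all permutations of length `n` avoiding each pattern in `pats`. -/
def PermSet (n : ℕ) (pats : List (List ℕ)) : Set (List ℕ) :=
  {l | IsPermList n l ∧ ∀ p ∈ pats, ¬ SeqContains l p}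

/-- The number of ascents of a sequence. -/
def ascCount (l : List ℕ) : ℕ :=
  ((Finset.range l.length).filter
    (fun i => i + 1 < l.length ∧ l.getD i 0 < l.getD (i + 1) 0)).card

/-- `l` is an ascent sequence. -/
def IsAscentSeq (l : List ℕ) : Prop :=
  (0 < l.length → l.getD 0 0 = 0) ∧
    ∀ j, 0 < j → j < l.length → l.getD j 0 ≤ 1 + ascCount (l.take j)

/-- The set of ascent sequences of length `n` avoiding each pattern in `pats`. -/
def AscentSeqSet (n : ℕ) (pats : List (List ℕ)) : Set (List ℕ) :=
  {l | l.length = n ∧ IsAscentSeq l ∧ ∀ p ∈ pats, ¬ SeqContains l p}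

/-- The Fibonacci numbers, indexed so that `F_0 = F_1 = 1`. -/
def paperFib : ℕ → ℕ
  | 0 => 1
  | 1 => 1
  | m + 2 => paperFib (m + 1) + paperFib m

def Has321 (l : List ℕ) : Prop :=
  ∃ i j k, i < j ∧ j < k ∧ k < l.length ∧
    l.getD k 0 < l.getD j 0 ∧ l.getD j 0 < l.getD i 0

def Has1423 (l : List ℕ) : Prop :=
  ∃ i j k m, i < j ∧ j < k ∧ k < m ∧ m < l.length ∧
    l.getD i 0 < l.getD k 0 ∧ l.getD k 0 < l.getD m 0 ∧ l.getD m 0 < l.getD j 0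

theorem List.sublist_iff_exists_getD {α : Type*} (d : α) {γ l : List α} :
    γ.Sublist l ↔ ∃ is : List ℕ, is.Pairwise (· < ·) ∧ (∀ i ∈ is, i < l.length) ∧
      γ = is.map (l.getD · d) := by
  constructor
  · intro h
    obtain ⟨is, rfl, hpw⟩ := List.sublist_eq_map_getElem h
    exact ⟨is.map (↑), List.pairwise_map.mpr hpw, by simp,
      by simp [Function.comp_def]⟩
  · rintro ⟨is, hpw, hlt, rfl⟩
    have := List.map_getElem_sublist (is := is.pmap Fin.mk hlt)
      (hpw.pmap hlt fun _ _ _ _ h => h)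
    convert this using 1
    refine List.ext_getElem (by simp) fun i _ _ => ?_
    simp [List.getElem?_eq_getElem (hlt _ (List.getElem_mem _))]

theorem List.getD_mem {α : Type*} {l : List α} {i : ℕ} (d : α) (hi : i < l.length) :
    l.getD i d ∈ l := by
  rw [List.getD_eq_getElem _ _ hi]
  exact List.getElem_mem hi

theorem List.Nodup.eq_of_getD_eq {α : Type*} {l : List α} (h : l.Nodup) {d : α} {i j : ℕ}
    (hi : i < l.length) (hj : j < l.length) (e : l.getD i d = l.getD j d) : i = j := by
  rw [List.getD_eq_getElem _ _ hi, List.getD_eq_getElem _ _ hj] at e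
  exact h.getElem_inj_iff.mp e

theorem seqContains_iff_exists_indices {l p : List ℕ} :
    SeqContains l p ↔ ∃ is : List ℕ, is.Pairwise (· < ·) ∧ (∀ i ∈ is, i < l.length) ∧
      SameRelOrder (is.map (l.getD · 0)) p := by
  simp only [SeqContains, List.sublist_iff_exists_getD 0]
  constructor
  · rintro ⟨_, ⟨is, hpw, hlt, rfl⟩, hrel⟩
    exact ⟨is, hpw, hlt, hrel⟩
  · rintro ⟨is, hpw, hlt, hrel⟩
    exact ⟨_, ⟨is, hpw, hlt, rfl⟩, hrel⟩

theorem seqContains_321_iff {l : List ℕ} : SeqContains l [3, 2, 1] ↔ Has321 l := by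
  rw [seqContains_iff_exists_indices]
  constructor
  · rintro ⟨is, hpw, hlt, hlen, hrel⟩
    obtain ⟨i, j, k, rfl⟩ := List.length_eq_three.mp (by simpa using hlen)
    have hij : i < j := List.rel_of_pairwise_cons hpw (by simp)
    have hjk : j < k := List.rel_of_pairwise_cons hpw.of_cons (by simp)
    have h1 : l.getD j 0 < l.getD i 0 := (hrel 1 0 (by simp) (by simp)).mpr (by decide)
    have h2 : l.getD k 0 < l.getD j 0 := (hrel 2 1 (by simp) (by simp)).mpr (by decide)
    exact ⟨i, j, k, hij, hjk, hlt k (by simp), h2, h1⟩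
  · rintro ⟨i, j, k, hij, hjk, hk, h1, h2⟩
    refine ⟨[i, j, k], by simp [hij, hjk, hij.trans hjk], by simp [hk, hjk.trans hk,
      (hij.trans hjk).trans hk], by simp, ?_⟩
    intro a b ha hb
    simp only [List.length_map, List.length_cons, List.length_nil, Nat.reduceAdd] at ha hb
    interval_cases a <;> interval_cases b <;>
      simp only [List.map_cons, List.map_nil, List.getD_cons_zero, List.getD_cons_succ] <;> omega

theorem seqContains_1423_iff {l : List ℕ} : SeqContains l [1, 4, 2, 3] ↔ Has1423 l := by
  rw [seqContains_iff_exists_indices]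
  constructor
  · rintro ⟨is, hpw, hlt, hlen, hrel⟩
    obtain ⟨i, j, k, m, rfl⟩ := List.length_eq_four.mp (by simpa using hlen)
    have hij : i < j := List.rel_of_pairwise_cons hpw (by simp)
    have hjk : j < k := List.rel_of_pairwise_cons hpw.of_cons (by simp)
    have hkm : k < m := List.rel_of_pairwise_cons hpw.of_cons.of_cons (by simp)
    have h1 : l.getD i 0 < l.getD k 0 := (hrel 0 2 (by simp) (by simp)).mpr (by decide)
    have h2 : l.getD k 0 < l.getD m 0 := (hrel 2 3 (by simp) (by simp)).mpr (by decide)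
    have h3 : l.getD m 0 < l.getD j 0 := (hrel 3 1 (by simp) (by simp)).mpr (by decide)
    exact ⟨i, j, k, m, hij, hjk, hkm, hlt m (by simp), h1, h2, h3⟩
  · rintro ⟨i, j, k, m, hij, hjk, hkm, hm, h1, h2, h3⟩
    have hk := hkm.trans hm
    have hj := hjk.trans hk
    refine ⟨[i, j, k, m], by simp [hij, hjk, hkm, hij.trans hjk, hjk.trans hkm,
      (hij.trans hjk).trans hkm], by simp [hm, hk, hj, hij.trans hj], by simp, ?_⟩
    intro a b ha hb
    simp only [List.length_map, List.length_cons, List.length_nil, Nat.reduceAdd] at ha hb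
    interval_cases a <;> interval_cases b <;>
      simp only [List.map_cons, List.map_nil, List.getD_cons_zero, List.getD_cons_succ] <;> omega

namespace IsPermList

variable {n : ℕ} {l : List ℕ}

theorem length_eq (h : IsPermList n l) : l.length = n := by
  simpa using List.Perm.length_eq h

theorem nodup (h : IsPermList n l) : l.Nodup :=
  h.nodup_iff.mpr List.nodup_range'

theorem mem_iff (h : IsPermList n l) {x : ℕ} : x ∈ l ↔ 1 ≤ x ∧ x ≤ n := by
  rw [List.Perm.mem_iff h, List.mem_range'_1]
  omega

theorem getD_mem_Icc (h : IsPermList n l) {i : ℕ} (hi : i < n) :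
    1 ≤ l.getD i 0 ∧ l.getD i 0 ≤ n :=
  h.mem_iff.mp (List.getD_mem 0 (by rw [h.length_eq]; exact hi))

theorem eq_of_getD_eq (h : IsPermList n l) {i j : ℕ} (hi : i < n) (hj : j < n)
    (e : l.getD i 0 = l.getD j 0) : i = j :=
  h.nodup.eq_of_getD_eq (by rw [h.length_eq]; exact hi) (by rw [h.length_eq]; exact hj) e

theorem exists_getD_eq (h : IsPermList n l) {x : ℕ} (h1 : 1 ≤ x) (hx : x ≤ n) :
    ∃ i < n, l.getD i 0 = x := by
  obtain ⟨i, hi, rfl⟩ := List.getElem_of_mem (h.mem_iff.mpr ⟨h1, hx⟩)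
  exact ⟨i, h.length_eq ▸ hi, List.getD_eq_getElem _ _ hi⟩

theorem append_iff {t : List ℕ} (ht : t.Perm (List.range' (n + 1) t.length)) :
    IsPermList (n + t.length) (l ++ t) ↔ IsPermList n l := by
  rw [IsPermList, IsPermList, ← List.range'_append, Nat.one_mul, Nat.add_comm 1 n]
  exact ⟨fun h => (List.perm_append_right_iff _).mp (h.trans (ht.append_left _).symm),
    fun h => h.append ht⟩

end IsPermList

theorem HasFishburnCopy.append {l : List ℕ} (h : HasFishburnCopy l) (t : List ℕ) :
    HasFishburnCopy (l ++ t) := by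
  obtain ⟨j, k, hjk, hk, h1, h2⟩ := h
  refine ⟨j, k, hjk, by rw [List.length_append]; omega, ?_, ?_⟩ <;>
    simp (disch := omega) only [List.getD_append] <;> assumption

theorem Has321.append {l : List ℕ} (h : Has321 l) (t : List ℕ) : Has321 (l ++ t) := by
  obtain ⟨i, j, k, hij, hjk, hk, h1, h2⟩ := h
  refine ⟨i, j, k, hij, hjk, by rw [List.length_append]; omega, ?_, ?_⟩ <;>
    simp (disch := omega) only [List.getD_append] <;> assumption

theorem Has1423.append {l : List ℕ} (h : Has1423 l) (t : List ℕ) : Has1423 (l ++ t) := by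
  obtain ⟨i, j, k, m, hij, hjk, hkm, hm, h1, h2, h3⟩ := h
  refine ⟨i, j, k, m, hij, hjk, hkm, by rw [List.length_append]; omega, ?_, ?_, ?_⟩ <;>
    simp (disch := omega) only [List.getD_append] <;> assumption

structure FishburnAvoiding (l : List ℕ) : Prop where
  fishburnFree : FishburnFree l
  not321 : ¬ Has321 l
  not1423 : ¬ Has1423 l

namespace FishburnAvoiding

variable {l : List ℕ}

theorem of_length_le_two (hl : l.length ≤ 2) : FishburnAvoiding l where
  fishburnFree := by rintro ⟨j, k, hjk, hk, -, -⟩; omega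
  not321 := by rintro ⟨i, j, k, hij, hjk, hk, -, -⟩; omega
  not1423 := by rintro ⟨i, j, k, m, hij, hjk, hkm, hm, -, -, -⟩; omega

theorem of_append {t : List ℕ} (h : FishburnAvoiding (l ++ t)) : FishburnAvoiding l where
  fishburnFree hl := h.fishburnFree (hl.append t)
  not321 hl := h.not321 (hl.append t)
  not1423 hl := h.not1423 (hl.append t)

-- The last entry of `l` is exempt, so that two appends give `l ++ [n + 2, n + 1]`.
theorem append_singleton (h : FishburnAvoiding l) {a : ℕ}
    (ha : ∀ i, i + 1 < l.length → l.getD i 0 < a) : FishburnAvoiding (l ++ [a]) := by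
  refine ⟨?_, ?_, ?_⟩
  · rintro ⟨j, k, hjk, hk, h1, h2⟩
    simp only [List.length_append, List.length_singleton] at hk
    rcases Nat.lt_or_ge k l.length with hk' | hk'
    · simp (disch := omega) only [List.getD_append] at h1 h2
      exact h.fishburnFree ⟨j, k, hjk, hk', h1, h2⟩
    · obtain rfl : k = l.length := by omega
      simp (disch := omega) only [List.getD_append, List.getD_append_right, Nat.sub_self,
        List.getD_cons_zero] at h1
      have := ha j (by omega)
      omega
  · rintro ⟨i, j, k, hij, hjk, hk, h1, h2⟩
    simp only [List.length_append, List.length_singleton] at hk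
    rcases Nat.lt_or_ge k l.length with hk' | hk'
    · simp (disch := omega) only [List.getD_append] at h1 h2
      exact h.not321 ⟨i, j, k, hij, hjk, hk', h1, h2⟩
    · obtain rfl : k = l.length := by omega
      simp (disch := omega) only [List.getD_append, List.getD_append_right, Nat.sub_self,
        List.getD_cons_zero] at h1 h2
      have := ha i (by omega)
      omega
  · rintro ⟨i, j, k, m, hij, hjk, hkm, hm, h1, h2, h3⟩
    simp only [List.length_append, List.length_singleton] at hm
    rcases Nat.lt_or_ge m l.length with hm' | hm'
    · simp (disch := omega) only [List.getD_append] at h1 h2 h3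
      exact h.not1423 ⟨i, j, k, m, hij, hjk, hkm, hm', h1, h2, h3⟩
    · obtain rfl : m = l.length := by omega
      simp (disch := omega) only [List.getD_append, List.getD_append_right, Nat.sub_self,
        List.getD_cons_zero] at h3
      have := ha j (by omega)
      omega

end FishburnAvoiding

-- `IsF n l` says that `l ∈ F_n(321, 1423)`.
structure IsF (n : ℕ) (l : List ℕ) : Prop where
  perm : IsPermList n l
  avoiding : FishburnAvoiding l

namespace IsF

variable {n : ℕ} {l : List ℕ}

theorem append_singleton_iff : IsF (n + 1) (l ++ [n + 1]) ↔ IsF n l := by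
  have hperm := IsPermList.append_iff (n := n) (l := l) (t := [n + 1]) (by simp)
  refine ⟨fun h => ⟨hperm.mp h.perm, h.avoiding.of_append⟩,
    fun h => ⟨hperm.mpr h.perm, h.avoiding.append_singleton fun i hi => ?_⟩⟩
  have := h.perm.getD_mem_Icc (i := i) (by rw [← h.perm.length_eq]; omega)
  omega

theorem append_pair_iff : IsF (n + 2) (l ++ [n + 2, n + 1]) ↔ IsF n l := by
  have hperm := IsPermList.append_iff (n := n) (l := l) (t := [n + 2, n + 1])
    (by simp [List.range'_succ, List.Perm.swap])
  refine ⟨fun h => ⟨hperm.mp h.perm, h.avoiding.of_append⟩,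
    fun h => ⟨hperm.mpr h.perm, ?_⟩⟩
  have hlen := h.perm.length_eq
  have hlt : ∀ i < n, l.getD i 0 ≤ n := fun i hi => (h.perm.getD_mem_Icc hi).2
  have h' : FishburnAvoiding (l ++ [n + 2]) :=
    h.avoiding.append_singleton fun i hi => by have := hlt i (by omega); omega
  rw [← List.singleton_append, ← List.append_assoc]
  refine h'.append_singleton fun i hi => ?_
  simp only [List.length_append, List.length_singleton] at hi
  simp (disch := omega) only [List.getD_append]
  have := hlt i (by omega)
  omega

theorem eq_append_singleton (h : IsF (n + 1) l) (hl : l.getD n 0 = n + 1) :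
    ∃ l', IsF n l' ∧ l = l' ++ [n + 1] := by
  have hlen := h.perm.length_eq
  obtain rfl | ⟨l', b, rfl⟩ := l.eq_nil_or_concat'
  · simp at hlen
  simp only [List.length_append, List.length_singleton, Nat.add_right_cancel_iff] at hlen
  subst hlen
  simp only [List.getD_append_right _ _ _ _ le_rfl, Nat.sub_self, List.getD_cons_zero] at hl
  subst hl
  exact ⟨l', append_singleton_iff.mp h, rfl⟩

theorem eq_append_pair (h : IsF (n + 2) l) (h1 : l.getD n 0 = n + 2)
    (h2 : l.getD (n + 1) 0 = n + 1) : ∃ l', IsF n l' ∧ l = l' ++ [n + 2, n + 1] := by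
  have hlen := h.perm.length_eq
  obtain rfl | ⟨l', b, rfl⟩ := l.eq_nil_or_concat'
  · simp at hlen
  obtain rfl | ⟨l'', a, rfl⟩ := l'.eq_nil_or_concat'
  · simp at hlen
  simp only [List.length_append, List.length_singleton] at hlen
  obtain rfl : l''.length = n := by omega
  simp only [List.append_assoc, List.singleton_append] at h h1 h2 ⊢
  simp (disch := omega) only [List.getD_append_right, Nat.sub_self, Nat.add_sub_cancel_left,
    List.getD_cons_zero, List.getD_cons_succ] at h1 h2
  subst h1 h2
  exact ⟨l'', append_pair_iff.mp h, rfl⟩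

end IsF

def InteriorIncreasing (l : List ℕ) : Prop :=
  ∀ i j, 0 < i → i < j → j + 1 < l.length → l.getD i 0 < l.getD j 0

theorem interiorIncreasing_cons_append_singleton {a b : ℕ} {m : List ℕ} :
    InteriorIncreasing (a :: (m ++ [b])) ↔ m.Pairwise (· < ·) := by
  have e : ∀ i (hi : i < m.length), (a :: (m ++ [b])).getD (i + 1) 0 = m[i] := fun i hi => by
    rw [List.getD_cons_succ, List.getD_append _ _ _ _ hi, List.getD_eq_getElem _ _ hi]
  rw [List.pairwise_iff_getElem]
  constructor
  · intro h i j hi hj hij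
    have := h (i + 1) (j + 1) (by omega) (by omega)
      (by simp only [List.length_cons, List.length_append, List.length_nil]; omega)
    rwa [e i hi, e j hj] at this
  · intro h i j hi hij hj
    obtain ⟨i, rfl⟩ := Nat.exists_eq_add_one_of_ne_zero hi.ne'
    obtain ⟨j, rfl⟩ := Nat.exists_eq_add_one_of_ne_zero (by omega : j ≠ 0)
    simp only [List.length_cons, List.length_append, List.length_nil] at hj
    rw [e i (by omega), e j (by omega)]
    exact h i j (by omega) (by omega) (by omega)

theorem InteriorIncreasing.eq_of_perm {l₁ l₂ : List ℕ} (hp : l₁.Perm l₂)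
    (h₁ : InteriorIncreasing l₁) (h₂ : InteriorIncreasing l₂) (h0 : l₁.getD 0 0 = l₂.getD 0 0)
    (hlast : l₁.getD (l₁.length - 1) 0 = l₂.getD (l₂.length - 1) 0) : l₁ = l₂ := by
  rcases l₁ with _ | ⟨a, t₁⟩
  · exact (List.perm_nil.mp hp.symm).symm
  rcases l₂ with _ | ⟨a', t₂⟩
  · exact List.perm_nil.mp hp
  simp only [List.getD_cons_zero] at h0
  subst h0
  have ht := (List.perm_cons a).mp hp
  obtain rfl | ⟨m₁, b, rfl⟩ := t₁.eq_nil_or_concat'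
  · rw [List.perm_nil.mp ht.symm]
  obtain rfl | ⟨m₂, b', rfl⟩ := t₂.eq_nil_or_concat'
  · rw [List.perm_nil.mp ht]
  simp only [List.length_cons, List.length_append, List.length_nil, Nat.add_sub_cancel,
    List.getD_cons_succ, List.getD_append_right _ _ _ _ le_rfl, Nat.sub_self, List.getD_cons_zero]
    at hlast
  subst hlast
  rw [interiorIncreasing_cons_append_singleton] at h₁ h₂
  rw [List.Perm.eq_of_pairwise' h₁ h₂ ((List.perm_append_right_iff _).mp ht)]

theorem FishburnAvoiding.of_interiorIncreasing {l : List ℕ} (hnd : l.Nodup)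
    (hinc : InteriorIncreasing l) (hends : l.getD 0 0 = l.getD (l.length - 1) 0 + 1)
    (h1 : l.getD 1 0 < l.getD 0 0) : FishburnAvoiding l := by
  refine ⟨?_, ?_, ?_⟩
  · rintro ⟨j, k, hjk, hk, e, hasc⟩
    rcases Nat.eq_zero_or_pos j with rfl | hj
    · rw [zero_add] at hasc
      omega
    rcases Nat.lt_or_ge (k + 1) l.length with hk' | hk'
    · have := hinc j k hj (by omega) hk'
      omega
    · obtain rfl : k = l.length - 1 := by omega
      have := hnd.eq_of_getD_eq (d := 0) (i := j) (j := 0) (by omega) (by omega) (by omega)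
      omega
  · rintro ⟨i, j, k, hij, hjk, hk, hkj, hji⟩
    rcases Nat.lt_or_ge (k + 1) l.length with hk' | hk'
    · have := hinc j k (by omega) hjk hk'
      omega
    obtain rfl : k = l.length - 1 := by omega
    rcases Nat.eq_zero_or_pos i with rfl | hi
    · omega
    · have := hinc i j hi hij (by omega)
      omega
  · rintro ⟨i, j, k, m, hij, hjk, hkm, hm, -, hkm', hmj⟩
    have := hinc j k (by omega) hjk (by omega)
    omega

def sigmaPerm (k n : ℕ) : List ℕ :=
  k :: (List.range' 1 (k - 2) ++ List.range' (k + 1) (n - k) ++ [k - 1])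

section sigmaPerm

variable {k n : ℕ}

theorem sigmaPerm_length (hk : 2 ≤ k) (hkn : k ≤ n) : (sigmaPerm k n).length = n := by
  simp only [sigmaPerm, List.length_cons, List.length_append, List.length_range',
    List.length_nil]
  omega

theorem sigmaPerm_getD_sub_one (hk : 2 ≤ k) (hkn : k ≤ n) :
    (sigmaPerm k n).getD (n - 1) 0 = k - 1 := by
  have hlen : (k :: (List.range' 1 (k - 2) ++ List.range' (k + 1) (n - k))).length = n - 1 := by
    simp only [List.length_cons, List.length_append, List.length_range']
    omega
  rw [sigmaPerm, ← List.cons_append, List.getD_append_right _ _ _ _ hlen.le, hlen, Nat.sub_self,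
    List.getD_cons_zero]

theorem sigmaPerm_getLast? : (sigmaPerm k n).getLast? = some (k - 1) := by
  rw [sigmaPerm, ← List.cons_append, List.getLast?_concat]

theorem sigmaPerm_isPermList (hk : 2 ≤ k) (hkn : k ≤ n) : IsPermList n (sigmaPerm k n) := by
  have hnd : (sigmaPerm k n).Nodup := by
    rw [sigmaPerm, List.nodup_cons, List.nodup_append, List.nodup_append]
    refine ⟨?_, ⟨List.nodup_range', List.nodup_range', fun a ha b hb => ?_⟩,
      List.nodup_singleton _, fun a ha b hb => ?_⟩
    · simp only [List.mem_append, List.mem_range'_1, List.mem_singleton]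
      omega
    · rw [List.mem_range'_1] at ha hb
      omega
    · simp only [List.mem_append, List.mem_range'_1, List.mem_singleton] at ha hb
      omega
  refine (List.perm_ext_iff_of_nodup hnd List.nodup_range').mpr fun x => ?_
  simp only [sigmaPerm, List.mem_cons, List.mem_append, List.mem_range'_1, List.not_mem_nil,
    or_false]
  omega

theorem interiorIncreasing_sigmaPerm : InteriorIncreasing (sigmaPerm k n) := by
  rw [sigmaPerm, interiorIncreasing_cons_append_singleton, List.pairwise_append]
  refine ⟨List.pairwise_lt_range', List.pairwise_lt_range', fun a ha b hb => ?_⟩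
  rw [List.mem_range'_1] at ha hb
  omega

theorem isF_sigmaPerm (hk : 3 ≤ k) (hkn : k ≤ n) : IsF n (sigmaPerm k n) := by
  have hperm := sigmaPerm_isPermList (by omega) hkn
  refine ⟨hperm, .of_interiorIncreasing hperm.nodup interiorIncreasing_sigmaPerm ?_ ?_⟩
  · rw [sigmaPerm_length (by omega) hkn, sigmaPerm_getD_sub_one (by omega) hkn]
    simp only [sigmaPerm, List.getD_cons_zero]
    omega
  · obtain ⟨j, hj⟩ : ∃ j, k - 2 = j + 1 := ⟨k - 3, by omega⟩
    rw [sigmaPerm, hj, List.range'_succ]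
    simp only [List.cons_append, List.getD_cons_succ, List.getD_cons_zero]
    omega

end sigmaPerm

theorem FishburnFree.getD_eq_one_of_forall_le {n t q : ℕ} {l : List ℕ} (hf : FishburnFree l)
    (hp : IsPermList n l) (htq : t < q) (hq : q < n)
    (hmin : ∀ i ≤ q, l.getD t 0 ≤ l.getD i 0) : l.getD t 0 = 1 := by
  have ht := hp.getD_mem_Icc (i := t) (by omega)
  by_contra hne
  obtain ⟨s, hs, hsv⟩ := hp.exists_getD_eq (x := l.getD t 0 - 1) (by omega) (by omega)
  have hqs : q < s := by
    by_contra
    have := hmin s (by omega)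
    omega
  have hasc : l.getD t 0 < l.getD (t + 1) 0 := by
    have hne' : l.getD t 0 ≠ l.getD (t + 1) 0 := fun e => by
      have := hp.eq_of_getD_eq (by omega) (by omega) e
      omega
    exact lt_of_le_of_ne (hmin (t + 1) (by omega)) hne'
  exact hf ⟨t, s, by omega, by rw [hp.length_eq]; exact hs, by omega, hasc⟩

namespace IsF

variable {n : ℕ} {l : List ℕ}

theorem getD_succ_lt_of_getD_eq_succ (h : IsF n l) {j r : ℕ} (hjr : j + 1 < r) (hr : r < n)
    (e : l.getD j 0 = l.getD r 0 + 1) : l.getD (j + 1) 0 < l.getD r 0 := by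
  have hr' : l.getD (j + 1) 0 ≠ l.getD r 0 := fun e' => by
    have := h.perm.eq_of_getD_eq (by omega) hr e'
    omega
  have hj' : l.getD (j + 1) 0 ≠ l.getD j 0 := fun e' => by
    have := h.perm.eq_of_getD_eq (by omega) (by omega) e'
    omega
  by_contra
  exact h.avoiding.fishburnFree ⟨j, r, hjr, by rw [h.perm.length_eq]; exact hr, e, by omega⟩

theorem getD_lt_of_getD_eq_succ (h : IsF n l) {i q r : ℕ} (hiq : i < q) (hqr : q < r)
    (hr : r < n) (e : l.getD q 0 = l.getD r 0 + 1) : l.getD i 0 < l.getD r 0 := by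
  have hq' : l.getD i 0 ≠ l.getD q 0 := fun e' => by
    have := h.perm.eq_of_getD_eq (by omega) (by omega) e'
    omega
  have hr' : l.getD i 0 ≠ l.getD r 0 := fun e' => by
    have := h.perm.eq_of_getD_eq (by omega) hr e'
    omega
  by_contra
  exact h.avoiding.not321 ⟨i, q, r, hiq, hqr, by rw [h.perm.length_eq]; exact hr, by omega,
    by omega⟩

theorem getD_eq_max_of_getD_eq_succ (h : IsF (n + 2) l)
    (e : l.getD n 0 = l.getD (n + 1) 0 + 1) : l.getD n 0 = n + 2 := by
  have hn := h.perm.getD_mem_Icc (i := n) (by omega)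
  by_contra hne
  obtain ⟨p, hp, hpv⟩ := h.perm.exists_getD_eq (x := n + 2) (by omega) le_rfl
  have hpn : p < n := by
    by_contra
    obtain rfl | rfl : p = n ∨ p = n + 1 := by omega
    all_goals omega
  exact h.avoiding.not321 ⟨p, n, n + 1, hpn, by omega, by rw [h.perm.length_eq]; omega, by omega,
    by omega⟩

theorem eq_zero_of_getD_eq_succ (h : IsF n l) {q r : ℕ} (hqr : q + 1 < r) (hr : r < n)
    (e : l.getD q 0 = l.getD r 0 + 1) : q = 0 := by
  by_contra hq
  obtain ⟨t, ht, htmin⟩ := (Finset.range q).exists_min_image (l.getD · 0)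
    ⟨0, Finset.mem_range.mpr (by omega)⟩
  rw [Finset.mem_range] at ht
  have htr := h.getD_lt_of_getD_eq_succ ht (by omega) hr e
  -- `t` is the position of the least entry before `q`; it is `1`, and `1, l q, l (q+1), l r`
  -- is then a `1423`.
  have ht1 : l.getD t 0 = 1 := by
    refine h.avoiding.fishburnFree.getD_eq_one_of_forall_le h.perm ht (by omega) fun i hi => ?_
    rcases Nat.lt_or_ge i q with hi' | hi'
    · exact htmin i (Finset.mem_range.mpr hi')
    · obtain rfl : i = q := by omega
      omega
  have hbr := h.getD_succ_lt_of_getD_eq_succ hqr hr e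
  have hb1 : 1 < l.getD (q + 1) 0 := by
    have hb := h.perm.getD_mem_Icc (i := q + 1) (by omega)
    have hne : l.getD (q + 1) 0 ≠ l.getD t 0 := fun e' => by
      have := h.perm.eq_of_getD_eq (by omega) (by omega) e'
      omega
    omega
  exact h.avoiding.not1423 ⟨t, q, q + 1, r, ht, by omega, hqr, by rw [h.perm.length_eq]; exact hr,
    by omega, hbr, by omega⟩

theorem interiorIncreasing (h : IsF (n + 2) l) (e : l.getD 0 0 = l.getD (n + 1) 0 + 1) :
    InteriorIncreasing l := by
  -- Avoiding `321` against the first and the last entry, an interior inversion puts an entry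
  -- above `l 0` before one below the last entry; with `l 1` and the last entry that is a `1423`.
  have ne_of_ne {a b : ℕ} (ha : a < n + 2) (hb : b < n + 2) (hab : a ≠ b) :
      l.getD a 0 ≠ l.getD b 0 := fun e' => hab (h.perm.eq_of_getD_eq ha hb e')
  have hlen := h.perm.length_eq
  intro i j hi hij hj
  rw [hlen] at hj
  have hl := h.avoiding.not321
  by_contra hc
  have hji : l.getD j 0 < l.getD i 0 := by
    have := ne_of_ne (a := i) (b := j) (by omega) (by omega) (by omega)
    omega
  have hbig : l.getD (n + 1) 0 + 1 < l.getD i 0 := by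
    have := ne_of_ne (a := i) (b := 0) (by omega) (by omega) (by omega)
    by_contra
    exact hl ⟨0, i, j, hi, hij, by omega, hji, by omega⟩
  have hsmall : l.getD j 0 < l.getD (n + 1) 0 := by
    have := ne_of_ne (a := j) (b := n + 1) (by omega) (by omega) (by omega)
    by_contra
    exact hl ⟨i, j, n + 1, hij, by omega, by omega, by omega, hji⟩
  have h1 : l.getD 1 0 < l.getD (n + 1) 0 :=
    h.getD_succ_lt_of_getD_eq_succ (j := 0) (by omega) (by omega) e
  have hi1 : i ≠ 1 := by
    rintro rfl
    omega
  have h1j : l.getD 1 0 < l.getD j 0 := by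
    have := ne_of_ne (a := 1) (b := j) (by omega) (by omega) (by omega)
    by_contra
    exact hl ⟨0, 1, j, by omega, by omega, by omega, by omega, by omega⟩
  exact h.avoiding.not1423 ⟨1, i, j, n + 1, by omega, hij, by omega, by omega, h1j, hsmall,
    by omega⟩

theorem cases (h : IsF (n + 3) l) :
    (∃ l', IsF (n + 2) l' ∧ l = l' ++ [n + 3]) ∨
      (∃ l', IsF (n + 1) l' ∧ l = l' ++ [n + 3, n + 2]) ∨
        ∃ k ∈ Set.Icc 3 (n + 3), l = sigmaPerm k (n + 3) := by
  have hv := h.perm.getD_mem_Icc (i := n + 2) (by omega)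
  set v := l.getD (n + 2) 0 with hv_def
  by_cases hvmax : v = n + 3
  · exact Or.inl (h.eq_append_singleton hvmax)
  obtain ⟨q, hq, e⟩ := h.perm.exists_getD_eq (x := v + 1) (by omega) (by omega)
  have hq2 : q ≠ n + 2 := by
    intro hq2
    rw [hq2, ← hv_def] at e
    omega
  by_cases hq1 : q = n + 1
  · subst hq1
    have hmax := h.getD_eq_max_of_getD_eq_succ e
    exact Or.inr (Or.inl (h.eq_append_pair hmax (show l.getD (n + 2) 0 = n + 2 by omega)))
  obtain rfl := h.eq_zero_of_getD_eq_succ (q := q) (r := n + 2) (by omega) (by omega) e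
  have h1 : l.getD 1 0 < v := h.getD_succ_lt_of_getD_eq_succ (j := 0) (by omega) (by omega) e
  have h1' := h.perm.getD_mem_Icc (i := 1) (by omega)
  refine Or.inr (Or.inr ⟨v + 1, ⟨by omega, by omega⟩, ?_⟩)
  have hσ := sigmaPerm_isPermList (k := v + 1) (n := n + 3) (by omega) (by omega)
  refine (h.interiorIncreasing e).eq_of_perm (h.perm.trans hσ.symm)
    interiorIncreasing_sigmaPerm ?_ ?_
  · rw [e, sigmaPerm, List.getD_cons_zero]
  · rw [h.perm.length_eq, hσ.length_eq, sigmaPerm_getD_sub_one (by omega) (by omega)]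
    rfl

end IsF

theorem List.setOf_perm_eq {α : Type*} [DecidableEq α] (l₀ : List α) :
    {l : List α | l.Perm l₀} = ↑l₀.permutations.toFinset := by
  ext l
  simp [List.mem_permutations]

theorem List.finite_setOf_perm {α : Type*} (l₀ : List α) : {l : List α | l.Perm l₀}.Finite := by
  classical
  rw [List.setOf_perm_eq]
  exact Finset.finite_toSet _

theorem List.ncard_setOf_perm {α : Type*} {l₀ : List α} (h : l₀.Nodup) :
    {l : List α | l.Perm l₀}.ncard = l₀.length.factorial := by
  classical
  rw [List.setOf_perm_eq, Set.ncard_coe_finset,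
    List.toFinset_card_of_nodup (List.nodup_permutations _ h), List.length_permutations]

theorem finite_setOf_isF (n : ℕ) : {l | IsF n l}.Finite :=
  (List.finite_setOf_perm _).subset fun _ h => h.perm

theorem ncard_setOf_isF_of_le_two {n : ℕ} (hn : n ≤ 2) : {l | IsF n l}.ncard = n.factorial := by
  have : {l | IsF n l} = {l | IsPermList n l} := by
    ext l
    exact ⟨fun h => h.perm, fun h => ⟨h, .of_length_le_two (h.length_eq ▸ hn)⟩⟩
  rw [this, show {l | IsPermList n l} = {l | l.Perm (List.range' 1 n)} from rfl,
    List.ncard_setOf_perm List.nodup_range', List.length_range']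

theorem setOf_isF_add_three (n : ℕ) :
    {l | IsF (n + 3) l} =
      ((· ++ [n + 3]) '' {l | IsF (n + 2) l} ∪ (· ++ [n + 3, n + 2]) '' {l | IsF (n + 1) l}) ∪
        (sigmaPerm · (n + 3)) '' Set.Icc 3 (n + 3) := by
  ext l
  constructor
  · intro h
    rcases h.cases with ⟨l', h', rfl⟩ | ⟨l', h', rfl⟩ | ⟨k, hk, rfl⟩
    · exact .inl (.inl ⟨l', h', rfl⟩)
    · exact .inl (.inr ⟨l', h', rfl⟩)
    · exact .inr ⟨k, hk, rfl⟩
  · rintro ((⟨l', h', rfl⟩ | ⟨l', h', rfl⟩) | ⟨k, hk, rfl⟩)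
    · exact IsF.append_singleton_iff.mpr h'
    · exact IsF.append_pair_iff.mpr h'
    · exact isF_sigmaPerm hk.1 hk.2

theorem ncard_setOf_isF_add_three (n : ℕ) :
    {l | IsF (n + 3) l}.ncard =
      {l | IsF (n + 2) l}.ncard + {l | IsF (n + 1) l}.ncard + (n + 1) := by
  have hA := (finite_setOf_isF (n + 2)).image (· ++ [n + 3])
  have hB := (finite_setOf_isF (n + 1)).image (· ++ [n + 3, n + 2])
  have hσ_inj : Function.Injective (sigmaPerm · (n + 3)) := fun _ _ e => List.head_eq_of_cons_eq e
  have hAB : Disjoint ((· ++ [n + 3]) '' {l | IsF (n + 2) l})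
      ((· ++ [n + 3, n + 2]) '' {l | IsF (n + 1) l}) := by
    rw [Set.disjoint_left]
    rintro _ ⟨l', -, rfl⟩ ⟨l'', -, e⟩
    simpa using congrArg List.getLast? e
  have hABσ : Disjoint
      ((· ++ [n + 3]) '' {l | IsF (n + 2) l} ∪ (· ++ [n + 3, n + 2]) '' {l | IsF (n + 1) l})
      ((sigmaPerm · (n + 3)) '' Set.Icc 3 (n + 3)) := by
    rw [Set.disjoint_left]
    rintro _ (⟨l', -, rfl⟩ | ⟨l', h', rfl⟩) ⟨k, ⟨-, hkn⟩, e⟩ <;>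
      have hlast := congrArg List.getLast? e <;>
      simp only [sigmaPerm_getLast?, List.getLast?_append, List.getLast?_cons_cons,
        List.getLast?_singleton, Option.some_or, Option.some.injEq] at hlast
    · omega
    · have hhead := congrArg (List.getD · 0 0) e
      have hlen := h'.perm.length_eq
      have := h'.perm.getD_mem_Icc (i := 0) (by omega)
      simp (disch := omega) only [sigmaPerm, List.getD_cons_zero, List.getD_append] at hhead
      omega
  rw [setOf_isF_add_three, Set.ncard_union_eq hABσ (hA.union hB) ((Set.finite_Icc _ _).image _),
    Set.ncard_union_eq hAB hA hB, Set.ncard_image_of_injective _ (List.append_left_injective _),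
    Set.ncard_image_of_injective _ (List.append_left_injective _),
    Set.ncard_image_of_injective _ hσ_inj]
  simp

theorem ncard_setOf_isF_add_eq_paperFib (n : ℕ) :
    {l | IsF n l}.ncard + n + 1 = paperFib (n + 2) := by
  induction n using Nat.strong_induction_on with
  | _ n ih =>
    match n with
    | 0 | 1 | 2 => rw [ncard_setOf_isF_of_le_two (by norm_num)]; rfl
    | n + 3 =>
      have h2 : {l | IsF (n + 2) l}.ncard + (n + 2) + 1 = paperFib (n + 4) := ih (n + 2) (by omega)
      have h1 : {l | IsF (n + 1) l}.ncard + (n + 1) + 1 = paperFib (n + 3) := ih (n + 1) (by omega)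
      rw [ncard_setOf_isF_add_three, show paperFib (n + 3 + 2) = paperFib (n + 4) + paperFib (n + 3)
        from rfl]
      omega

theorem stmt15 (n : ℕ) :
    (FishburnSet n [[3, 2, 1], [1, 4, 2, 3]]).ncard = paperFib (n + 2) - n - 1 := by
  have hset : FishburnSet n [[3, 2, 1], [1, 4, 2, 3]] = {l | IsF n l} := by
    ext l
    simp only [FishburnSet, Set.mem_ofPred_eq, List.forall_mem_cons, List.not_mem_nil,
      IsEmpty.forall_iff, forall_const, and_true, seqContains_321_iff, seqContains_1423_iff]
    exact ⟨fun ⟨hp, hf, h3, h4⟩ => ⟨hp, hf, h3, h4⟩, fun ⟨hp, hf, h3, h4⟩ => ⟨hp, hf, h3, h4⟩⟩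
  have := ncard_setOf_isF_add_eq_paperFib n
  rw [hset]
  omega
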